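/- The Shannon entropy H(π^T) = −∑_a π^T(a) log π^T(a) of a temperature-scaled softmax is a nondecreasing function of T on (0, ∞). -/

import Mathlib

/-!
Write `β = 1/T` and `p_β = softmax (β • l)`. Gibbs' variational principle
`H(p) + ⟨p, x⟩ ≤ log ∑ exp x`, with equality at `p = softmax x`, applied with `x = β₂ • l`
and `p = p_{β₁}` for `β₂ ≤ β₁`, gives `H(p_{β₁}) ≤ H(p_{β₂}) + β₂ (⟨p_{β₂}, l⟩ - ⟨p_{β₁}, l⟩)`.
The last term is `≤ 0`: cooling tilts the weights by the factor `exp ((β₁ - β₂) l)`, which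
increases with `l`, so by a weighted Chebyshev inequality the mean of `l` goes up.
-/

open Real Finset

noncomputable def softmax {A : Type*} [Fintype A] (x : A → ℝ) (a : A) : ℝ :=
  exp (x a) / ∑ b, exp (x b)

noncomputable def shannonEntropy {A : Type*} [Fintype A] (p : A → ℝ) : ℝ :=
  -∑ a, p a * log (p a)

theorem mul_log_sub_mul_log_le_sub {p q : ℝ} (hp : 0 ≤ p) (hq : 0 < q) :
    p * log q - p * log p ≤ q - p := by
  rcases hp.eq_or_lt with rfl | hp
  · simpa using hq.le
  calc p * log q - p * log p = p * log (q / p) := by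
        rw [log_div hq.ne' hp.ne']; ring
    _ ≤ p * (q / p - 1) := by gcongr; exact log_le_sub_one_of_pos (div_pos hq hp)
    _ = q - p := by field_simp

theorem Monovary.sum_mul_sum_mul_le {ι : Type*} {s : Finset ι} {g f l : ι → ℝ}
    (hg : ∀ i ∈ s, 0 ≤ g i) (hfl : Monovary f l) :
    (∑ i ∈ s, g i * f i) * ∑ i ∈ s, g i * l i ≤
      (∑ i ∈ s, g i) * ∑ i ∈ s, g i * f i * l i := by
  have hpairs : 0 ≤ ∑ i ∈ s, ∑ j ∈ s, g i * g j * ((f i - f j) * (l i - l j)) :=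
    sum_nonneg fun i hi => sum_nonneg fun j hj =>
      mul_nonneg (mul_nonneg (hg i hi) (hg j hj)) (hfl.sub_mul_sub_nonneg j i)
  have hexpand : ∑ i ∈ s, ∑ j ∈ s, g i * g j * ((f i - f j) * (l i - l j)) =
      2 * ((∑ i ∈ s, g i) * ∑ i ∈ s, g i * f i * l i -
        (∑ i ∈ s, g i * f i) * ∑ i ∈ s, g i * l i) := by
    have hterm : ∀ i j, g i * g j * ((f i - f j) * (l i - l j)) =
        g j * (g i * f i * l i) - g i * f i * (g j * l j) - g i * l i * (g j * f j) +
          g i * (g j * f j * l j) := fun i j => by ring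
    simp only [hterm, sum_add_distrib, sum_sub_distrib, ← mul_sum, ← sum_mul]
    ring
  linarith

section Softmax

variable {A : Type*} [Fintype A]

theorem sum_exp_pos [Nonempty A] (x : A → ℝ) : 0 < ∑ a, exp (x a) :=
  sum_pos (fun a _ => exp_pos (x a)) univ_nonempty

theorem softmax_pos [Nonempty A] (x : A → ℝ) (a : A) : 0 < softmax x a :=
  div_pos (exp_pos _) (sum_exp_pos x)

theorem sum_softmax [Nonempty A] (x : A → ℝ) : ∑ a, softmax x a = 1 := by
  simp only [softmax, ← sum_div]
  exact div_self (sum_exp_pos x).ne'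

theorem log_softmax [Nonempty A] (x : A → ℝ) (a : A) :
    log (softmax x a) = x a - log (∑ b, exp (x b)) := by
  rw [softmax, log_div (exp_pos _).ne' (sum_exp_pos x).ne', log_exp]

theorem shannonEntropy_softmax_add_sum_mul [Nonempty A] (x : A → ℝ) :
    shannonEntropy (softmax x) + ∑ a, softmax x a * x a = log (∑ a, exp (x a)) := by
  simp only [shannonEntropy, log_softmax, mul_sub, sum_sub_distrib, ← sum_mul, sum_softmax]
  ring

theorem shannonEntropy_add_sum_mul_le_log_sum_exp [Nonempty A] {p : A → ℝ}
    (hp : ∀ a, 0 ≤ p a) (hp_sum : ∑ a, p a = 1) (x : A → ℝ) :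
    shannonEntropy p + ∑ a, p a * x a ≤ log (∑ a, exp (x a)) := by
  have hgibbs : ∑ a, (p a * log (softmax x a) - p a * log (p a)) ≤
      ∑ a, (softmax x a - p a) :=
    sum_le_sum fun a _ => mul_log_sub_mul_log_le_sub (hp a) (softmax_pos x a)
  simp only [sum_sub_distrib, sum_softmax, hp_sum, log_softmax, mul_sub, ← sum_mul,
    one_mul] at hgibbs
  rw [shannonEntropy]
  linarith

theorem monotone_sum_softmax_smul_mul [Nonempty A] (l : A → ℝ) :
    Monotone fun β : ℝ => ∑ a, softmax (β • l) a * l a := by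
  intro d c hdc
  have htilt : ∀ a, exp (d * l a) * exp ((c - d) * l a) = exp (c * l a) := fun a => by
    rw [← exp_add]; congr 1; ring
  have hmono : Monovary (fun a => exp ((c - d) * l a)) l :=
    (monovary_self l).comp_monotone_left
      (exp_monotone.comp (monotone_mul_left_of_nonneg (sub_nonneg.2 hdc)))
  have hcheb := hmono.sum_mul_sum_mul_le (s := univ) (g := fun a => exp (d * l a))
    fun a _ => (exp_pos _).le
  simp only [htilt] at hcheb
  simp only [softmax, Pi.smul_apply, smul_eq_mul, div_mul_eq_mul_div, ← sum_div]
  rw [div_le_div_iff₀ (sum_exp_pos _) (sum_exp_pos _)]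
  linarith

theorem shannonEntropy_softmax_smul_antitoneOn [Nonempty A] (l : A → ℝ) :
    AntitoneOn (fun β : ℝ => shannonEntropy (softmax (β • l))) (Set.Ici 0) := by
  intro β₂ hβ₂ β₁ _ hβ
  have hsmul : ∀ (p : A → ℝ) (β : ℝ), ∑ a, p a * (β • l) a = β * ∑ a, p a * l a := by
    intro p β
    simp only [Pi.smul_apply, smul_eq_mul, mul_sum]
    exact sum_congr rfl fun a _ => by ring
  have hgibbs := shannonEntropy_add_sum_mul_le_log_sum_exp
    (fun a => (softmax_pos (β₁ • l) a).le) (sum_softmax (β₁ • l)) (β₂ • l)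
  rw [← shannonEntropy_softmax_add_sum_mul, hsmul, hsmul] at hgibbs
  have hmean := mul_le_mul_of_nonneg_left (monotone_sum_softmax_smul_mul l hβ) hβ₂
  dsimp only
  linarith

end Softmax

/-- The Shannon entropy of the temperature-scaled softmax is nondecreasing
in the temperature T on (0, ∞). -/
theorem softmax_entropy_mono_temperature {A : Type*} [Fintype A] [Nonempty A]
    (l : A → ℝ) (T₁ T₂ : ℝ) (hT₁ : 0 < T₁) (h : T₁ ≤ T₂) :
    -∑ a, (exp (l a / T₁) / ∑ b, exp (l b / T₁)) *
        log (exp (l a / T₁) / ∑ b, exp (l b / T₁)) ≤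
      -∑ a, (exp (l a / T₂) / ∑ b, exp (l b / T₂)) *
        log (exp (l a / T₂) / ∑ b, exp (l b / T₂)) := by
  have hscale : ∀ T : ℝ, T⁻¹ • l = fun a => l a / T := fun T => by
    ext a; simp [div_eq_inv_mul]
  have key := shannonEntropy_softmax_smul_antitoneOn l
    (inv_nonneg.2 (hT₁.trans_le h).le) (inv_nonneg.2 hT₁.le) (inv_anti₀ hT₁ h)
  simp only [hscale] at key
  exact key
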